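/- Let (I, f_{1,∞}) be an m-periodic non-autonomous system on I = [0,1]. If (I, f_{1,∞}) is weakly mixing, then it is both ergodically sensitive and syndetically sensitive. -/

import Mathlib

open Set Filter MeasureTheory TopologicalSpace

/-- `iterN f n = f_{n-1} ∘ ⋯ ∘ f_0`, the `n`-th iterate of the non-autonomous system. -/
def iterN {X : Type*} (f : ℕ → X → X) : ℕ → X → X
  | 0 => id
  | n + 1 => f n ∘ iterN f n

/-- Topological transitivity of a non-autonomous system. -/
def NATransitive {X : Type*} [TopologicalSpace X] (f : ℕ → X → X) : Prop :=
  ∀ U V : Set X, IsOpen U → IsOpen V → U.Nonempty → V.Nonempty →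
    ∃ n : ℕ, 0 < n ∧ (iterN f n '' U ∩ V).Nonempty

/-- Weak mixing (order 2). -/
def NAWeaklyMixing {X : Type*} [TopologicalSpace X] (f : ℕ → X → X) : Prop :=
  ∀ U₁ U₂ V₁ V₂ : Set X, IsOpen U₁ → IsOpen U₂ → IsOpen V₁ → IsOpen V₂ →
    U₁.Nonempty → U₂.Nonempty → V₁.Nonempty → V₂.Nonempty →
    ∃ n : ℕ, 0 < n ∧ (iterN f n '' U₁ ∩ V₁).Nonempty ∧ (iterN f n '' U₂ ∩ V₂).Nonempty

/-- Weak mixing of order `m`. -/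
def NAWeaklyMixingOrder {X : Type*} [TopologicalSpace X] (f : ℕ → X → X) (m : ℕ) : Prop :=
  ∀ U V : Fin m → Set X, (∀ i, IsOpen (U i)) → (∀ i, IsOpen (V i)) →
    (∀ i, (U i).Nonempty) → (∀ i, (V i).Nonempty) →
    ∃ n : ℕ, 0 < n ∧ ∀ i, (iterN f n '' U i ∩ V i).Nonempty

/-- Banks's condition. -/
def NABanks {X : Type*} [TopologicalSpace X] (f : ℕ → X → X) : Prop :=
  ∀ U V W : Set X, IsOpen U → IsOpen V → IsOpen W →
    U.Nonempty → V.Nonempty → W.Nonempty →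
    ∃ n : ℕ, 0 < n ∧ (iterN f n '' U ∩ V).Nonempty ∧ (iterN f n '' U ∩ W).Nonempty

/-- Topological mixing. -/
def NAMixing {X : Type*} [TopologicalSpace X] (f : ℕ → X → X) : Prop :=
  ∀ U V : Set X, IsOpen U → IsOpen V → U.Nonempty → V.Nonempty →
    ∃ N : ℕ, ∀ n ≥ N, (iterN f n '' U ∩ V).Nonempty

/-- `blockC f s k = f_{s+k-1} ∘ ⋯ ∘ f_s`. -/
def blockC {X : Type*} (f : ℕ → X → X) (s k : ℕ) : X → X :=
  iterN (fun i => f (s + i)) k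

/-- The `k`-th iterate system `f_{1,∞}^{[k]}`. -/
def kthSys {X : Type*} (f : ℕ → X → X) (k : ℕ) : ℕ → X → X :=
  fun n => blockC f (n * k) k

/-- The induced non-autonomous system on Borel probability measures (pushforwards). -/
noncomputable def inducedM {X : Type*} [MeasurableSpace X] [TopologicalSpace X]
    [BorelSpace X] (f : ℕ → X → X) (hf : ∀ n, Continuous (f n)) :
    ℕ → ProbabilityMeasure X → ProbabilityMeasure X :=
  fun n μ => μ.map ((hf n).measurable.aemeasurable)

/-- The induced non-autonomous system on the hyperspace of non-empty compact subsets. -/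
def inducedK {X : Type*} [TopologicalSpace X] (f : ℕ → X → X) (hf : ∀ n, Continuous (f n)) :
    ℕ → NonemptyCompacts X → NonemptyCompacts X :=
  fun n K => ⟨⟨f n '' (K : Set X), K.isCompact.image (hf n)⟩, K.nonempty.image _⟩

/-- The set `N(U, δ)` of sensitivity times. -/
def NSet {X : Type*} [PseudoMetricSpace X] (f : ℕ → X → X) (U : Set X) (δ : ℝ) : Set ℕ :=
  {n | 0 < n ∧ ∃ x ∈ U, ∃ y ∈ U, δ < dist (iterN f n x) (iterN f n y)}

/-- Sensitive dependence on initial conditions. -/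
def NASensitive {X : Type*} [PseudoMetricSpace X] (f : ℕ → X → X) : Prop :=
  ∃ δ : ℝ, 0 < δ ∧ ∀ x : X, ∀ U : Set X, IsOpen U → x ∈ U →
    ∃ y ∈ U, ∃ n : ℕ, 0 < n ∧ δ < dist (iterN f n x) (iterN f n y)

/-- A thick subset of ℕ. -/
def ThickSet (S : Set ℕ) : Prop := ∀ p : ℕ, ∃ n : ℕ, ∀ j ≤ p, n + j ∈ S

/-- A syndetic subset of ℕ. -/
def SyndeticSet (S : Set ℕ) : Prop := ∃ a : ℕ, ∀ i : ℕ, ∃ j, i ≤ j ∧ j ≤ i + a ∧ j ∈ S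

/-- Upper density of a subset of ℕ. -/
noncomputable def upperDens (S : Set ℕ) : ℝ :=
  Filter.limsup (fun n : ℕ => (Nat.card ↥(S ∩ Set.Iio n) : ℝ) / n) Filter.atTop

/-- Periodic point of a non-autonomous system. -/
def NAPeriodicPt {X : Type*} (f : ℕ → X → X) (x : X) : Prop :=
  ∃ n : ℕ, 0 < n ∧ ∀ k : ℕ, 0 < k → iterN f (n * k) x = x

/-!
Weak mixing and the intermediate value theorem make `f_1^M(G)` contain a fixed interval
`L = [a, b] ⊂ (0, 1)` for every nonempty open `G` and arbitrarily large `M`. Taking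
`G = (f_1^N)⁻¹(int L)` shows that from every time `N` with `L ⊆ f_1^N(U)` some block
`f_{N+d} ∘ ⋯ ∘ f_{N+1}` maps `L` over itself, and then `L ⊆ f_1^{N+d}(U)` again. Following such a
chain of times and applying the pigeonhole principle to them modulo `m` produces a block of length
divisible by `m` that covers `L`; by periodicity this block repeats forever, so `L ⊆ f_1^{N+kd}(U)`
for all `k`. Thus `N(U, δ)` contains an arithmetic progression for every `δ < b - a`, and
arithmetic progressions are syndetic and of positive upper density.
-/

section NonAutonomous

variable {X : Type*} {f : ℕ → X → X}

theorem iterN_continuous [TopologicalSpace X] (hf : ∀ n, Continuous (f n)) (n : ℕ) :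
    Continuous (iterN f n) := by
  induction n with
  | zero => exact continuous_id
  | succ n ih => exact (hf n).comp ih

theorem iterN_add (n k : ℕ) : iterN f (n + k) = blockC f n k ∘ iterN f n := by
  induction k with
  | zero => rfl
  | succ k ih => rw [← add_assoc, iterN, ih]; rfl

theorem blockC_add (s k₁ k₂ : ℕ) :
    blockC f s (k₁ + k₂) = blockC f (s + k₁) k₂ ∘ blockC f s k₁ := by
  induction k₂ with
  | zero => rfl
  | succ k ih =>
    rw [← add_assoc, blockC, iterN, ← blockC, ih, ← add_assoc s k₁ k]
    rfl

theorem blockC_add_mul_of_periodic {m : ℕ} (hper : Function.Periodic f m) (s k t : ℕ) :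
    blockC f (s + k * m) t = blockC f s t := by
  unfold blockC
  congr 1
  funext i
  rw [add_right_comm]
  exact hper.nat_mul k (s + i)

theorem subset_blockC_image_add {K : Set X} {n d₁ d₂ : ℕ} (h₁ : K ⊆ blockC f n d₁ '' K)
    (h₂ : K ⊆ blockC f (n + d₁) d₂ '' K) : K ⊆ blockC f n (d₁ + d₂) '' K := by
  rw [blockC_add, image_comp]
  exact h₂.trans (image_mono h₁)

theorem subset_iterN_image_add {K U : Set X} {n d : ℕ} (hU : K ⊆ iterN f n '' U)
    (hK : K ⊆ blockC f n d '' K) : K ⊆ iterN f (n + d) '' U := by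
  rw [iterN_add, image_comp]
  exact hK.trans (image_mono hU)

theorem subset_iterN_image_add_mul {m n d : ℕ} {K U : Set X} (hper : Function.Periodic f m)
    (hd : m ∣ d) (hU : K ⊆ iterN f n '' U) (hK : K ⊆ blockC f n d '' K) (k : ℕ) :
    K ⊆ iterN f (n + k * d) '' U := by
  obtain ⟨e, rfl⟩ := hd
  induction k with
  | zero => simpa using hU
  | succ k ih =>
    have hblock : blockC f (n + k * (m * e)) (m * e) = blockC f n (m * e) := by
      rw [show n + k * (m * e) = n + (k * e) * m by ring, blockC_add_mul_of_periodic hper]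
    rw [show n + (k + 1) * (m * e) = n + k * (m * e) + m * e by ring]
    exact subset_iterN_image_add ih (hblock ▸ hK)

end NonAutonomous

/-- `Q n d` is a property of the passage from time `n` to time `n + d`. -/
theorem Nat.exists_dvd_of_chain {P : ℕ → Prop} {Q : ℕ → ℕ → Prop}
    (hQ : ∀ n d₁ d₂, Q n d₁ → Q (n + d₁) d₂ → Q n (d₁ + d₂))
    (hPQ : ∀ n d, P n → Q n d → P (n + d)) (hstep : ∀ n, P n → ∃ d, 0 < d ∧ Q n d)
    {n₀ : ℕ} (h₀ : P n₀) {m : ℕ} (hm : 0 < m) :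
    ∃ n d, 0 < d ∧ m ∣ d ∧ P n ∧ Q n d := by
  choose! D hD using hstep
  set s : ℕ → ℕ := fun i => (fun n => n + D n)^[i] n₀
  have hs_succ (i : ℕ) : s (i + 1) = s i + D (s i) := Function.iterate_succ_apply' _ _ _
  have hP (i : ℕ) : P (s i) := by
    induction i with
    | zero => exact h₀
    | succ i ih => rw [hs_succ]; exact hPQ _ _ ih (hD _ ih).2
  have hchain (i k : ℕ) : ∃ d, 0 < d ∧ s (i + k + 1) = s i + d ∧ Q (s i) d := by
    induction k with
    | zero => exact ⟨D (s i), (hD _ (hP i)).1, hs_succ i, (hD _ (hP i)).2⟩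
    | succ k ih =>
      obtain ⟨d, hd, hsd, hQd⟩ := ih
      have hnext := (hD _ (hP (i + k + 1))).2
      rw [hsd] at hnext
      refine ⟨d + D (s i + d), by omega, ?_, hQ _ _ _ hQd hnext⟩
      rw [← add_assoc, hs_succ, hsd, add_assoc]
  obtain ⟨i, j, hij, hmod⟩ := Finite.exists_lt_map_eq_of_forall_mem
    (f := fun i => s i % m) (fun i => Nat.mod_lt (s i) hm) (finite_Iio m)
  obtain ⟨k, rfl⟩ := Nat.exists_eq_add_of_lt hij
  obtain ⟨d, hd, hsd, hQd⟩ := hchain i k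
  refine ⟨s i, d, hd, ?_, hP i, hQd⟩
  have hdvd := (Nat.modEq_iff_dvd' (Nat.le_add_right (s i) d)).1 (hsd ▸ hmod)
  rwa [Nat.add_sub_cancel_left] at hdvd

theorem syndeticSet_of_add_mul_mem {S : Set ℕ} {c T : ℕ} (hT : 0 < T)
    (hS : ∀ k, c + k * T ∈ S) : SyndeticSet S := by
  refine ⟨c + T, fun i => ⟨c + (i / T + 1) * T, ?_, ?_, hS _⟩⟩
  · have := Nat.lt_div_mul_add (a := i) hT
    nlinarith
  · have := Nat.div_mul_le_self i T
    nlinarith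

theorem natCard_inter_Iio_le (S : Set ℕ) (n : ℕ) : Nat.card ↥(S ∩ Iio n) ≤ n :=
  (Nat.card_mono (finite_Iio n) inter_subset_right).trans_eq (by simp)

theorem le_upperDens_of_frequently {S : Set ℕ} {ε : ℝ}
    (h : ∃ᶠ n in atTop, ε ≤ (Nat.card ↥(S ∩ Iio n) : ℝ) / n) : ε ≤ upperDens S :=
  le_limsup_of_frequently_le h <| isBoundedUnder_of
    ⟨1, fun n => div_le_one_of_le₀ (by exact_mod_cast natCard_inter_Iio_le S n) n.cast_nonneg⟩

theorem upperDens_pos_of_add_mul_mem {S : Set ℕ} {c T : ℕ} (hT : 0 < T)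
    (hS : ∀ k, c + k * T ∈ S) : 0 < upperDens S := by
  refine (by positivity : (0 : ℝ) < 1 / (c + T + 1)).trans_le
    (le_upperDens_of_frequently (frequently_atTop.2 fun k => ⟨c + k * T + 1, ?_, ?_⟩))
  · nlinarith
  · have hinj : Function.Injective fun i => c + i * T := fun i j hij =>
      Nat.eq_of_mul_eq_mul_right hT (Nat.add_left_cancel hij)
    have hsub : (fun i => c + i * T) '' Iio (k + 1) ⊆ S ∩ Iio (c + k * T + 1) := by
      rintro _ ⟨i, hi, rfl⟩
      exact ⟨hS i, by simp only [mem_Iio] at hi ⊢; nlinarith⟩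
    have hcard : k + 1 ≤ Nat.card ↥(S ∩ Iio (c + k * T + 1)) := by
      have := Nat.card_mono ((finite_Iio _).inter_of_right S) hsub
      rw [Nat.card_image_of_injective hinj] at this
      simpa using this
    rw [div_le_div_iff₀ (by positivity) (by positivity)]
    have hcard' : ((k : ℝ) + 1) ≤ Nat.card ↥(S ∩ Iio (c + k * T + 1)) := by exact_mod_cast hcard
    have hT' : (1 : ℝ) ≤ T := by exact_mod_cast hT
    push_cast
    nlinarith [k.cast_nonneg (α := ℝ), c.cast_nonneg (α := ℝ)]

open Topology

namespace NAWeaklyMixing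

variable {f : ℕ → unitInterval → unitInterval} {a b : unitInterval}

theorem exists_gt_Icc_subset_image (h : NAWeaklyMixing f) (hf : ∀ n, Continuous (f n))
    (ha : 0 < a) (hab : a < b) (hb : b < 1) {G : Set unitInterval} (hG : IsOpen G)
    (hne : G.Nonempty) (N : ℕ) : ∃ M, N < M ∧ Icc a b ⊆ iterN f M '' G := by
  obtain ⟨w, hw⟩ := hne
  have hnear : ∀ᶠ x in 𝓝 w, ∀ n ∈ Iic N, dist (iterN f n x) (iterN f n w) < dist a b / 2 :=
    (eventually_all_finite (finite_Iic N)).2 fun n _ =>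
      ((iterN_continuous hf n).tendsto w).eventually
        (Metric.ball_mem_nhds _ (half_pos (dist_pos.2 hab.ne)))
  obtain ⟨c, d, -, hcd_nhds, hcd_sub⟩ :=
    exists_Icc_mem_subset_of_mem_nhds (inter_mem (hG.mem_nhds hw) hnear)
  have hO : (interior (Icc c d)).Nonempty := ⟨w, mem_interior_iff_mem_nhds.2 hcd_nhds⟩
  obtain ⟨M, hM, ⟨_, ⟨x, hx, rfl⟩, hxa⟩, ⟨_, ⟨y, hy, rfl⟩, hyb⟩⟩ :=
    h _ _ (Iio a) (Ioi b) isOpen_interior isOpen_interior isOpen_Iio isOpen_Ioi hO hO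
      ⟨0, ha⟩ ⟨1, hb⟩
  have hx' := hcd_sub (interior_subset hx)
  have hy' := hcd_sub (interior_subset hy)
  refine ⟨M, ?_, ?_⟩
  · -- up to time `N` the images of `Icc c d` are too short to reach both sides of `[a, b]`
    by_contra! hMN
    have hclose := (dist_triangle_right _ _ _).trans_lt
      (add_lt_add (hx'.2 M hMN) (hy'.2 M hMN))
    have hfar : dist a b ≤ dist (iterN f M x) (iterN f M y) := by
      have hxa' : ((iterN f M x : unitInterval) : ℝ) < a := hxa
      have hyb' : (b : ℝ) < (iterN f M y : unitInterval) := hyb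
      have hab' : (a : ℝ) < b := hab
      rw [Subtype.dist_eq, Subtype.dist_eq, Real.dist_eq, Real.dist_eq,
        abs_of_neg (by linarith), abs_of_neg (by linarith)]
      linarith
    linarith
  · have hconn :=
      (isPreconnected_Icc (a := c) (b := d)).image _ (iterN_continuous hf M).continuousOn
    exact (Icc_subset_Icc hxa.le hyb.le).trans <| (hconn.Icc_subset
      (mem_image_of_mem _ (interior_subset hx)) (mem_image_of_mem _ (interior_subset hy))).trans
      (image_mono fun z hz => (hcd_sub hz).1)

theorem exists_Icc_subset_blockC_image (h : NAWeaklyMixing f) (hf : ∀ n, Continuous (f n))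
    (ha : 0 < a) (hab : a < b) (hb : b < 1) {N : ℕ} (hN : Icc a b ⊆ range (iterN f N)) :
    ∃ d, 0 < d ∧ Icc a b ⊆ blockC f N d '' Icc a b := by
  obtain ⟨z, haz, hzb⟩ := exists_between hab
  obtain ⟨x, hx⟩ := hN ⟨haz.le, hzb.le⟩
  obtain ⟨M, hNM, hcov⟩ := h.exists_gt_Icc_subset_image hf ha hab hb
    (isOpen_Ioo.preimage (iterN_continuous hf N)) ⟨x, show iterN f N x ∈ Ioo a b from
      hx ▸ ⟨haz, hzb⟩⟩ N
  obtain ⟨d, rfl⟩ := Nat.exists_eq_add_of_lt hNM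
  refine ⟨d + 1, d.succ_pos, ?_⟩
  rw [add_assoc, iterN_add, image_comp] at hcov
  exact hcov.trans (image_mono ((image_preimage_subset _ _).trans Ioo_subset_Icc_self))

theorem exists_add_mul_mem_NSet (h : NAWeaklyMixing f) (hf : ∀ n, Continuous (f n)) {m : ℕ}
    (hm : 0 < m) (hper : Function.Periodic f m) (ha : 0 < a) (hab : a < b) (hb : b < 1)
    {U : Set unitInterval} (hU : IsOpen U) (hne : U.Nonempty) {δ : ℝ} (hδ : δ < dist a b) :
    ∃ c T, 0 < T ∧ ∀ k, c + k * T ∈ NSet f U δ := by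
  obtain ⟨n₀, -, hn₀⟩ := h.exists_gt_Icc_subset_image hf ha hab hb hU hne 0
  obtain ⟨n, d, hd, hmd, hcovU, hcovL⟩ := Nat.exists_dvd_of_chain
    (P := fun n => Icc a b ⊆ iterN f n '' U) (Q := fun n d => Icc a b ⊆ blockC f n d '' Icc a b)
    (fun _ _ _ => subset_blockC_image_add) (fun _ _ => subset_iterN_image_add)
    (fun _ hn => h.exists_Icc_subset_blockC_image hf ha hab hb
      (hn.trans (image_subset_range _ _))) hn₀ hm
  refine ⟨n + d, d, hd, fun k => ⟨by omega, ?_⟩⟩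
  have hcov := subset_iterN_image_add_mul hper hmd hcovU hcovL (k + 1)
  obtain ⟨x, hxU, hx⟩ := hcov (left_mem_Icc.2 hab.le)
  obtain ⟨y, hyU, hy⟩ := hcov (right_mem_Icc.2 hab.le)
  refine ⟨x, hxU, y, hyU, ?_⟩
  rwa [show n + d + k * d = n + (k + 1) * d by ring, hx, hy]

end NAWeaklyMixing

/-- an `m`-periodic weakly mixing non-autonomous system on `[0,1]` is
both ergodically sensitive and syndetically sensitive. -/
theorem periodic_interval_weaklyMixing_ergodic_syndetic_sensitive
    (f : ℕ → unitInterval → unitInterval) (hf : ∀ n, Continuous (f n)) (m : ℕ)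
    (hm : 0 < m) (hper : ∀ n, f (n + m) = f n) (h : NAWeaklyMixing f) :
    (∃ δ : ℝ, 0 < δ ∧ ∀ U : Set unitInterval, IsOpen U → U.Nonempty →
        0 < upperDens (NSet f U δ)) ∧
      (∃ δ : ℝ, 0 < δ ∧ ∀ U : Set unitInterval, IsOpen U → U.Nonempty →
        SyndeticSet (NSet f U δ)) := by
  obtain ⟨a, ha, ha1⟩ := exists_between (zero_lt_one : (0 : unitInterval) < 1)
  obtain ⟨b, hab, hb⟩ := exists_between ha1
  have hdist : 0 < dist a b := dist_pos.2 hab.ne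
  have hprog (U : Set unitInterval) (hU : IsOpen U) (hne : U.Nonempty) :
      ∃ c T, 0 < T ∧ ∀ k, c + k * T ∈ NSet f U (dist a b / 2) :=
    h.exists_add_mul_mem_NSet hf hm hper ha hab hb hU hne (half_lt_self hdist)
  refine ⟨⟨_, half_pos hdist, fun U hU hne => ?_⟩, ⟨_, half_pos hdist, fun U hU hne => ?_⟩⟩
  · obtain ⟨c, T, hT, hS⟩ := hprog U hU hne
    exact upperDens_pos_of_add_mul_mem hT hS
  · obtain ⟨c, T, hT, hS⟩ := hprog U hU hne
    exact syndeticSet_of_add_mul_mem hT hS
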